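/- arXiv:2505.05606 — 4 statements merged into one kernel-verified Lean document; each statement's English description precedes it below -/
import Mathlib

section
/- Let n be a multiple of 5, let A and B be disjoint sets of sizes 2n/5 − 1 and 3n/5 + 1 respectively, and let H_ext be the 3-graph with vertex set A ∪ B whose edges are all 3-element subsets of A ∪ B which intersect A. Then δ(H_ext) = 2n/5 − 1, every T-tiling in H_ext has size at most |A|/2 < n/5, and consequently H_ext admits no perfect T-tiling. -/
open Finset

/-- `H` is a 3-uniform hypergraph (every edge has exactly 3 vertices). -/
def Is3Graph {V : Type*} [DecidableEq V] (H : Finset (Finset V)) : Prop :=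
  ∀ e ∈ H, e.card = 3

/-- The codegree of the pair `x, y` in `H`: the number of edges containing both. -/
def codeg {V : Type*} [DecidableEq V] (H : Finset (Finset V)) (x y : V) : ℕ :=
  (H.filter fun e => x ∈ e ∧ y ∈ e).card

/-- A 5-set `S` supports a copy of the generalised triangle `T` in `H`. -/
def SupportsT {V : Type*} [DecidableEq V] (H : Finset (Finset V)) (S : Finset V) : Prop :=
  ∃ a b c d e : V, ({a, b, c, d, e} : Finset V).card = 5 ∧
    ({a, b, c, d, e} : Finset V) = S ∧
    ({a, b, c} : Finset V) ∈ H ∧ ({a, b, d} : Finset V) ∈ H ∧ ({c, d, e} : Finset V) ∈ H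

/-- `P` is a `T`-tiling in `H`: a collection of pairwise disjoint 5-sets, each
supporting a copy of the generalised triangle. -/
def IsTTiling {V : Type*} [DecidableEq V] (H P : Finset (Finset V)) : Prop :=
  (∀ S ∈ P, SupportsT H S) ∧ (P : Set (Finset V)).PairwiseDisjoint id

/-- `H[W]` has a perfect `T`-tiling: a `T`-tiling whose tiles partition `W`. -/
def HasPerfectTTilingOn {V : Type*} [DecidableEq V] (H : Finset (Finset V)) (W : Finset V) : Prop :=
  ∃ P : Finset (Finset V), IsTTiling H P ∧ P.biUnion id = W

/-- `H` has a perfect `T`-tiling. -/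
def HasPerfectTTiling {V : Type*} [DecidableEq V] [Fintype V] (H : Finset (Finset V)) : Prop :=
  HasPerfectTTilingOn H Finset.univ

lemma card_le_four' {V : Type*} [DecidableEq V] (b c d e : V) :
    ({b, c, d, e} : Finset V).card ≤ 4 := by
  have h1 := Finset.card_insert_le b ({c, d, e} : Finset V)
  have h2 := Finset.card_insert_le c ({d, e} : Finset V)
  have h3 := Finset.card_insert_le d ({e} : Finset V)
  have h4 : ({e} : Finset V).card = 1 := Finset.card_singleton e
  omega

lemma card_le_three' {V : Type*} [DecidableEq V] (c d e : V) :
    ({c, d, e} : Finset V).card ≤ 3 := by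
  have h2 := Finset.card_insert_le c ({d, e} : Finset V)
  have h3 := Finset.card_insert_le d ({e} : Finset V)
  have h4 : ({e} : Finset V).card = 1 := Finset.card_singleton e
  omega

lemma card_le_two' {V : Type*} [DecidableEq V] (d e : V) :
    ({d, e} : Finset V).card ≤ 2 := by
  have h3 := Finset.card_insert_le d ({e} : Finset V)
  have h4 : ({e} : Finset V).card = 1 := Finset.card_singleton e
  omega

lemma five_distinct {V : Type*} [DecidableEq V] {a b c d e : V}
    (h : ({a, b, c, d, e} : Finset V).card = 5) :
    a ∉ ({b, c, d, e} : Finset V) ∧ b ∉ ({c, d, e} : Finset V) ∧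
      c ∉ ({d, e} : Finset V) ∧ d ≠ e := by
  have ha : a ∉ ({b, c, d, e} : Finset V) := by
    intro hm
    rw [Finset.insert_eq_self.2 hm] at h
    have := card_le_four' b c d e; omega
  have h4 : ({b, c, d, e} : Finset V).card = 4 := by
    have := Finset.card_insert_of_notMem ha; omega
  have hb : b ∉ ({c, d, e} : Finset V) := by
    intro hm
    rw [Finset.insert_eq_self.2 hm] at h4
    have := card_le_three' c d e; omega
  have h3 : ({c, d, e} : Finset V).card = 3 := by
    have := Finset.card_insert_of_notMem hb; omega
  have hc : c ∉ ({d, e} : Finset V) := by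
    intro hm
    rw [Finset.insert_eq_self.2 hm] at h3
    have := card_le_two' d e; omega
  have h2 : ({d, e} : Finset V).card = 2 := by
    have := Finset.card_insert_of_notMem hc; omega
  have hd : d ≠ e := by
    intro hm; subst hm; simp at h2
  exact ⟨ha, hb, hc, hd⟩

lemma card_triple {V : Type*} [DecidableEq V] {x y z : V}
    (hxy : x ≠ y) (hzx : z ≠ x) (hzy : z ≠ y) :
    ({x, y, z} : Finset V).card = 3 := by
  rw [Finset.card_insert_of_notMem (by simp [hxy, Ne.symm hzx]),
      Finset.card_insert_of_notMem (by simp [Ne.symm hzy]), Finset.card_singleton]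

lemma codeg_eq {V : Type*} [DecidableEq V] [Fintype V] (A : Finset V)
    (H : Finset (Finset V))
    (hH : H = Finset.univ.filter fun e : Finset V => e.card = 3 ∧ (e ∩ A).Nonempty)
    (x y : V) (hxy : x ≠ y) :
    codeg H x y =
      (Finset.univ.filter fun z : V =>
        z ≠ x ∧ z ≠ y ∧ (({x, y, z} : Finset V) ∩ A).Nonempty).card := by
  subst hH
  unfold codeg
  rw [Finset.filter_filter]
  symm
  apply Finset.card_bij (fun z _ => ({x, y, z} : Finset V))
  · intro z hz
    simp only [mem_filter, mem_univ, true_and] at hz ⊢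
    refine ⟨⟨card_triple hxy hz.1 hz.2.1, hz.2.2⟩, by simp, by simp⟩
  · intro z1 h1 z2 h2 heq
    simp only [mem_filter, mem_univ, true_and] at h1 h2
    have : z1 ∈ ({x, y, z2} : Finset V) := heq ▸ (by simp : z1 ∈ ({x, y, z1} : Finset V))
    simp only [mem_insert, mem_singleton] at this
    tauto
  · intro e he
    simp only [mem_filter, mem_univ, true_and] at he
    obtain ⟨⟨hcard, hne⟩, hx, hy⟩ := he
    have hsub : ({x, y} : Finset V) ⊆ e := by
      intro w hw; simp at hw; rcases hw with rfl | rfl <;> assumption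
    have hcard2 : ({x, y} : Finset V).card = 2 := by
      rw [Finset.card_insert_of_notMem (by simp [hxy]), Finset.card_singleton]
    have h1 : (e \ {x, y}).card = 1 := by
      rw [Finset.card_sdiff_of_subset hsub, hcard, hcard2]
    obtain ⟨z, hz⟩ := Finset.card_eq_one.mp h1
    have hzmem : z ∈ e \ ({x, y} : Finset V) := hz ▸ Finset.mem_singleton_self z
    simp only [Finset.mem_sdiff, mem_insert, mem_singleton] at hzmem
    obtain ⟨hze, hznxy⟩ := hzmem
    have hzx : z ≠ x := fun h => hznxy (Or.inl h)
    have hzy : z ≠ y := fun h => hznxy (Or.inr h)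
    have hesub : ({x, y, z} : Finset V) ⊆ e := by
      intro w hw; simp at hw; rcases hw with rfl | rfl | rfl <;> assumption
    have heeq : ({x, y, z} : Finset V) = e :=
      Finset.eq_of_subset_of_card_le hesub (by rw [hcard, card_triple hxy hzx hzy])
    refine ⟨z, by simp [hzx, hzy, heeq, hne], heeq⟩

lemma tile_props {V : Type*} [DecidableEq V] (A : Finset V) (H : Finset (Finset V))
    (hHA : ∀ e ∈ H, (e ∩ A).Nonempty) (S : Finset V) (hS : SupportsT H S) :
    S.card = 5 ∧ 2 ≤ (S ∩ A).card := by
  obtain ⟨a, b, c, d, e, h5, rfl, h1, h2, h3⟩ := hS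
  refine ⟨h5, ?_⟩
  obtain ⟨ha, hb, hc, hd⟩ := five_distinct h5
  simp only [mem_insert, mem_singleton, not_or] at ha hb hc
  obtain ⟨u, hu⟩ := hHA _ h1
  obtain ⟨v, hv⟩ := hHA _ h3
  rw [Finset.mem_inter] at hu hv
  simp only [mem_insert, mem_singleton] at hu hv
  have huS : u ∈ ({a, b, c, d, e} : Finset V) := by
    rcases hu.1 with h' | h' | h' <;> subst h' <;> simp
  have hvS : v ∈ ({a, b, c, d, e} : Finset V) := by
    rcases hv.1 with h' | h' | h' <;> subst h' <;> simp
  rw [← Nat.lt_iff_add_one_le, Finset.one_lt_card]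
  by_cases huv : u = v
  · subst huv
    have huc : u = c := by
      rcases hu.1 with h1' | h1' | h1'
      · exfalso; rcases hv.1 with h2' | h2' | h2'
        · exact ha.2.1 (h1'.symm.trans h2')
        · exact ha.2.2.1 (h1'.symm.trans h2')
        · exact ha.2.2.2 (h1'.symm.trans h2')
      · exfalso; rcases hv.1 with h2' | h2' | h2'
        · exact hb.1 (h1'.symm.trans h2')
        · exact hb.2.1 (h1'.symm.trans h2')
        · exact hb.2.2 (h1'.symm.trans h2')
      · exact h1'
    obtain ⟨w, hw⟩ := hHA _ h2
    rw [Finset.mem_inter] at hw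
    simp only [mem_insert, mem_singleton] at hw
    have hwS : w ∈ ({a, b, c, d, e} : Finset V) := by
      rcases hw.1 with h' | h' | h' <;> subst h' <;> simp
    have hwc : w ≠ c := by
      rcases hw.1 with rfl | rfl | rfl
      · exact ha.2.1
      · exact hb.1
      · exact fun h => hc.1 h.symm
    exact ⟨u, Finset.mem_inter.2 ⟨huS, hu.2⟩, w, Finset.mem_inter.2 ⟨hwS, hw.2⟩,
      fun h => hwc (h.symm.trans huc)⟩
  · exact ⟨u, Finset.mem_inter.2 ⟨huS, hu.2⟩, v, Finset.mem_inter.2 ⟨hvS, hv.2⟩, huv⟩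

/-- The extremal example: with `n = 5m`, take disjoint `A`, `B` with `|A| = 2n/5 - 1` and
`|B| = 3n/5 + 1`, and let `H` consist of all triples meeting `A`.  Then the minimum
codegree of `H` is exactly `2n/5 - 1`, every `T`-tiling has size at most `|A|/2 < n/5`,
and `H` has no perfect `T`-tiling. -/
theorem extremal_example {V : Type*} [DecidableEq V] [Fintype V]
    (m : ℕ) (hm : 1 ≤ m)
    (A B : Finset V) (hdisj : Disjoint A B) (hcover : A ∪ B = Finset.univ)
    (hA : A.card = 2 * m - 1) (hB : B.card = 3 * m + 1)
    (H : Finset (Finset V))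
    (hH : H = Finset.univ.filter fun e : Finset V => e.card = 3 ∧ (e ∩ A).Nonempty) :
    (∀ x y : V, x ≠ y → 2 * m - 1 ≤ codeg H x y) ∧
    (∃ x y : V, x ≠ y ∧ codeg H x y = 2 * m - 1) ∧
    (∀ P : Finset (Finset V), IsTTiling H P → 2 * P.card ≤ A.card) ∧
    (A.card : ℝ) / 2 < (m : ℝ) ∧
    ¬ HasPerfectTTiling H := by
  have hV : Fintype.card V = 5 * m := by
    rw [← Finset.card_univ, ← hcover, Finset.card_union_of_disjoint hdisj, hA, hB]
    omega
  have hHA : ∀ e ∈ H, (e ∩ A).Nonempty := by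
    intro e he; rw [hH, mem_filter] at he; exact he.2.2
  -- Part 3 first (used by part 5)
  have part3 : ∀ P : Finset (Finset V), IsTTiling H P → 2 * P.card ≤ A.card := by
    intro P hP
    have hdisjP : ∀ S ∈ P, ∀ S' ∈ P, S ≠ S' → Disjoint (S ∩ A) (S' ∩ A) := by
      intro S hS S' hS' hne
      exact Finset.disjoint_of_subset_left (Finset.inter_subset_left)
        (Finset.disjoint_of_subset_right (Finset.inter_subset_left)
          (hP.2 (Finset.mem_coe.2 hS) (Finset.mem_coe.2 hS') hne))
    calc 2 * P.card = ∑ S ∈ P, 2 := by rw [Finset.sum_const, smul_eq_mul, mul_comm]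
      _ ≤ ∑ S ∈ P, (S ∩ A).card :=
          Finset.sum_le_sum fun S hS => (tile_props A H hHA S (hP.1 S hS)).2
      _ = (P.biUnion fun S => S ∩ A).card := (Finset.card_biUnion hdisjP).symm
      _ ≤ A.card := Finset.card_le_card (by
          intro w hw
          simp only [Finset.mem_biUnion] at hw
          obtain ⟨S, _, hw⟩ := hw
          exact (Finset.mem_inter.1 hw).2)
  -- Part 1
  have part1 : ∀ x y : V, x ≠ y → 2 * m - 1 ≤ codeg H x y := by
    intro x y hxy
    rw [codeg_eq A H hH x y hxy]
    by_cases hxA : x ∈ A ∨ y ∈ A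
    · have hsub : Finset.univ \ ({x, y} : Finset V) ⊆
          Finset.univ.filter fun z : V =>
            z ≠ x ∧ z ≠ y ∧ (({x, y, z} : Finset V) ∩ A).Nonempty := by
        intro z hz
        simp only [Finset.mem_sdiff, mem_insert, mem_singleton, not_or] at hz
        rw [mem_filter]
        refine ⟨mem_univ z, hz.2.1, hz.2.2, ?_⟩
        rcases hxA with h | h
        · exact ⟨x, Finset.mem_inter.2 ⟨by simp, h⟩⟩
        · exact ⟨y, Finset.mem_inter.2 ⟨by simp, h⟩⟩
      have hcard : (Finset.univ \ ({x, y} : Finset V)).card = 5 * m - 2 := by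
        rw [Finset.card_sdiff_of_subset (Finset.subset_univ _), Finset.card_univ, hV]
        have : ({x, y} : Finset V).card = 2 := by
          rw [Finset.card_insert_of_notMem (by simp [hxy]), Finset.card_singleton]
        omega
      have := Finset.card_le_card hsub
      omega
    · push_neg at hxA
      have hsub : A ⊆ Finset.univ.filter fun z : V =>
          z ≠ x ∧ z ≠ y ∧ (({x, y, z} : Finset V) ∩ A).Nonempty := by
        intro z hz
        rw [mem_filter]
        have hzx : z ≠ x := fun h => hxA.1 (h ▸ hz)
        have hzy : z ≠ y := fun h => hxA.2 (h ▸ hz)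
        exact ⟨mem_univ z, hzx, hzy, ⟨z, Finset.mem_inter.2 ⟨by simp, hz⟩⟩⟩
      have := Finset.card_le_card hsub
      omega
  refine ⟨part1, ?_, part3, ?_, ?_⟩
  · -- Part 2: two vertices in B
    obtain ⟨x, hx, y, hy, hxy⟩ := Finset.one_lt_card.1 (by omega : 1 < B.card)
    have hxA : x ∉ A := Finset.disjoint_right.1 hdisj hx
    have hyA : y ∉ A := Finset.disjoint_right.1 hdisj hy
    refine ⟨x, y, hxy, ?_⟩
    rw [codeg_eq A H hH x y hxy]
    have hfeq : (Finset.univ.filter fun z : V =>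
        z ≠ x ∧ z ≠ y ∧ (({x, y, z} : Finset V) ∩ A).Nonempty) = A := by
      ext z
      simp only [mem_filter, mem_univ, true_and]
      constructor
      · rintro ⟨hzx, hzy, w, hw⟩
        rw [Finset.mem_inter] at hw
        simp only [mem_insert, mem_singleton] at hw
        rcases hw.1 with rfl | rfl | rfl
        · exact absurd hw.2 hxA
        · exact absurd hw.2 hyA
        · exact hw.2
      · intro hz
        exact ⟨fun h => hxA (h ▸ hz), fun h => hyA (h ▸ hz),
          ⟨z, Finset.mem_inter.2 ⟨by simp, hz⟩⟩⟩
    rw [hfeq, hA]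
  · -- Part 4
    rw [hA, div_lt_iff₀ (by norm_num : (0:ℝ) < 2)]
    have : ((2 * m - 1 : ℕ) : ℝ) = 2 * m - 1 := by
      rw [Nat.cast_sub (by omega)]; push_cast; ring
    rw [this]
    have : (1:ℝ) ≤ m := by exact_mod_cast hm
    linarith
  · -- Part 5
    rintro ⟨P, hP, hUnion⟩
    have hcard5 : ∀ S ∈ P, S.card = 5 := fun S hS => (tile_props A H hHA S (hP.1 S hS)).1
    have hsum : (P.biUnion id).card = 5 * P.card := by
      rw [Finset.card_biUnion (fun S hS S' hS' hne =>
        hP.2 (Finset.mem_coe.2 hS) (Finset.mem_coe.2 hS') hne)]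
      simp only [id_eq]
      rw [Finset.sum_congr rfl hcard5, Finset.sum_const, smul_eq_mul, mul_comm]
    rw [hUnion, Finset.card_univ, hV] at hsum
    have h3 := part3 P hP
    rw [hA] at h3
    omega
end

section
/- There exist β0 > 0 and, for each 0 < β < β0, a natural number n0 such that the following holds for all n ≥ n0: let A and B be disjoint sets of sizes 3n and 2n respectively, and let J be a 5-uniform hypergraph on the 5n vertices V = A ∪ B in which every edge contains exactly 3 vertices of A and exactly 2 vertices of B. If J has at least (1 − β)·C(3n,3)·C(2n,2) edges and every vertex of J is contained in at least n⁴/10⁸ edges of J, then J admits a perfect matching. -/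
/-!
Call a 5-set with three vertices in `A` and two in `B` that is not an edge of `J` a non-edge.
There are at most `β·C(3n,3)·C(2n,2)` non-edges, so only few vertices lie in many of them; these
bad vertices are covered by a greedy matching, because every vertex has large degree while two
vertices share at most `(5n)³` edges. Extend it to a largest matching `M`. If `M` is not perfect,
no edge lies among the uncovered vertices, so all their (3,2)-subsets are non-edges and `M`
misses few vertices. Take five uncovered roots, three in `A` and two in `B`, and four disjoint
families of `n/5` edges of `M` outside the greedy part. One edge from each family and the roots
form a 5×5 grid whose cyclic diagonals are five disjoint (3,2)-sets, each through one root. A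
non-edge through a root is a diagonal for at most `5⁴` choices of the four edges, and the roots
are not bad, so some choice makes every diagonal an edge; trading those four edges of `M` for
the five diagonals gives a larger matching.
-/

open Finset Function

variable {V : Type*}

section Matching

def IsMatching (J M : Finset (Finset V)) : Prop :=
  M ⊆ J ∧ (M : Set (Finset V)).PairwiseDisjoint id

variable [DecidableEq V] {J M : Finset (Finset V)}

lemma IsMatching.eq_of_mem_of_mem (hM : IsMatching J M) {e f : Finset V} (he : e ∈ M)
    (hf : f ∈ M) {x : V} (hxe : x ∈ e) (hxf : x ∈ f) : e = f := by
  by_contra hne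
  exact disjoint_left.mp (hM.2 he hf hne) hxe hxf

lemma IsMatching.insert (hM : IsMatching J M) {e : Finset V} (he : e ∈ J)
    (hdisj : Disjoint e (M.biUnion id)) : IsMatching J (insert e M) := by
  refine ⟨insert_subset he hM.1, ?_⟩
  rw [coe_insert]
  exact hM.2.insert fun f hf _ => hdisj.mono_right (subset_biUnion_of_mem id hf)

lemma card_insert_of_disjoint_biUnion {e : Finset V} (he : e.Nonempty)
    (hdisj : Disjoint e (M.biUnion id)) : (insert e M).card = M.card + 1 := by
  refine card_insert_of_notMem fun heM => ?_
  obtain ⟨x, hx⟩ := he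
  exact disjoint_left.mp hdisj hx (mem_biUnion.mpr ⟨e, heM, hx⟩)

lemma IsMatching.sdiff_union {T P : Finset (Finset V)} {R : Finset V} (hM : IsMatching J M)
    (hP : IsMatching J P) (hT : T ⊆ M) (hPT : P.biUnion id ⊆ T.biUnion id ∪ R)
    (hR : Disjoint R (M.biUnion id)) : IsMatching J (M \ T ∪ P) := by
  refine ⟨union_subset (sdiff_subset.trans hM.1) hP.1, ?_⟩
  rw [coe_union, Set.pairwiseDisjoint_union]
  refine ⟨hM.2.subset (by simp), hP.2, fun f hf p hp _ => disjoint_left.mpr fun x hxf hxp => ?_⟩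
  obtain ⟨hfM, hfT⟩ := mem_sdiff.mp hf
  rcases mem_union.mp (hPT (mem_biUnion.mpr ⟨p, hp, hxp⟩)) with hxT | hxR
  · obtain ⟨e, heT, hxe⟩ := mem_biUnion.mp hxT
    exact hfT (hM.eq_of_mem_of_mem hfM (hT heT) hxf hxe ▸ heT)
  · exact disjoint_left.mp hR hxR (mem_biUnion.mpr ⟨f, hfM, hxf⟩)

lemma card_sdiff_union {T P : Finset (Finset V)} {R : Finset V} (hT : T ⊆ M)
    (hP : ∀ p ∈ P, ¬ Disjoint p R) (hR : Disjoint R (M.biUnion id)) :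
    (M \ T ∪ P).card = M.card - T.card + P.card := by
  rw [card_union_of_disjoint, card_sdiff_of_subset hT]
  refine disjoint_right.mpr fun p hp hpM => hP p hp (disjoint_left.mpr fun x hxp hxR => ?_)
  exact disjoint_left.mp hR hxR (mem_biUnion.mpr ⟨p, (mem_sdiff.mp hpM).1, hxp⟩)

lemma card_biUnion_inter (hM : (M : Set (Finset V)).PairwiseDisjoint id) (X : Finset V)
    {a : ℕ} (h : ∀ e ∈ M, (e ∩ X).card = a) : (M.biUnion id ∩ X).card = M.card * a := by
  rw [biUnion_inter, card_biUnion fun e he f hf hef =>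
    (hM he hf hef).mono inter_subset_left inter_subset_left]
  exact sum_const_nat h

lemma card_sdiff_biUnion (hM : (M : Set (Finset V)).PairwiseDisjoint id) (X : Finset V)
    {a : ℕ} (h : ∀ e ∈ M, (e ∩ X).card = a) :
    (X \ M.biUnion id).card = X.card - M.card * a := by
  rw [card_sdiff, card_biUnion_inter hM X h]

lemma card_filter_not_disjoint_le (hM : (M : Set (Finset V)).PairwiseDisjoint id)
    (a : Finset V) : (M.filter fun e => ¬ Disjoint e a).card ≤ a.card := by
  calc (M.filter fun e => ¬ Disjoint e a).card
      = ∑ e ∈ M.filter fun e => ¬ Disjoint e a, 1 := card_eq_sum_ones _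
    _ ≤ ∑ e ∈ M.filter fun e => ¬ Disjoint e a, (e ∩ a).card :=
        sum_le_sum fun e he =>
          card_pos.mpr (not_disjoint_iff_nonempty_inter.mp (mem_filter.mp he).2)
    _ = ((M.filter fun e => ¬ Disjoint e a).biUnion id ∩ a).card := by
        rw [biUnion_inter, card_biUnion fun e he f hf hef => (hM (mem_filter.mp he).1
          (mem_filter.mp hf).1 hef).mono inter_subset_left inter_subset_left]
        rfl
    _ ≤ a.card := card_le_card inter_subset_right

lemma exists_max_matching_superset {M₀ : Finset (Finset V)} (hM₀ : IsMatching J M₀) :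
    ∃ M, IsMatching J M ∧ M₀ ⊆ M ∧
      ∀ Q, IsMatching J Q → M₀ ⊆ Q → Q.card ≤ M.card := by
  classical
  have hmem {Q} : Q ∈ J.powerset.filter (fun Q => IsMatching J Q ∧ M₀ ⊆ Q) ↔
      IsMatching J Q ∧ M₀ ⊆ Q := by
    simp only [mem_filter, mem_powerset, and_iff_right_iff_imp]
    exact fun hQ => hQ.1.1
  obtain ⟨M, hM, hmax⟩ := exists_max_image _ card ⟨M₀, hmem.mpr ⟨hM₀, subset_rfl⟩⟩
  exact ⟨M, (hmem.mp hM).1, (hmem.mp hM).2,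
    fun Q hQ hM₀Q => hmax Q (hmem.mpr ⟨hQ, hM₀Q⟩)⟩

end Matching

section Degree

variable [DecidableEq V] {J : Finset (Finset V)}

def degree (J : Finset (Finset V)) (v : V) : ℕ :=
  (J.filter (v ∈ ·)).card

lemma sum_degree [Fintype V] {k : ℕ} (hJ : ∀ e ∈ J, e.card = k) :
    ∑ v, degree J v = J.card * k := by
  simp only [degree, card_filter]
  rw [sum_comm]
  exact sum_const_nat fun e he => by simp [hJ e he]

lemma card_filter_lt_degree_mul_le [Fintype V] {k : ℕ} (hJ : ∀ e ∈ J, e.card = k) (δ : ℝ) :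
    ((univ.filter fun v => δ < degree J v).card : ℝ) * δ ≤ J.card * k := by
  have hsum := card_nsmul_le_sum (univ.filter fun v => δ < degree J v)
    (fun v => (degree J v : ℝ)) δ fun v hv => (mem_filter.mp hv).2.le
  have hsub : ∑ v ∈ univ.filter fun v => δ < degree J v, (degree J v : ℝ)
      ≤ ∑ v, (degree J v : ℝ) :=
    sum_le_sum_of_subset_of_nonneg (subset_univ _) fun _ _ _ => Nat.cast_nonneg _
  have htotal : ∑ v, (degree J v : ℝ) = J.card * k := by exact_mod_cast sum_degree hJ
  rw [nsmul_eq_mul] at hsum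
  linarith

lemma card_filter_mem_mem_le [Fintype V] {k : ℕ} (hJ : ∀ e ∈ J, e.card = k + 2) {v w : V}
    (hvw : v ≠ w) :
    (J.filter fun e => v ∈ e ∧ w ∈ e).card ≤ (Fintype.card V).choose k := by
  rw [← card_univ, ← card_powersetCard]
  refine card_le_card_of_injOn (fun e => (e.erase v).erase w) (fun e he => ?_)
    fun e he f hf hef => ?_
  · obtain ⟨heJ, hv, hw⟩ := mem_filter.mp he
    rw [mem_coe, mem_powersetCard, card_erase_of_mem (mem_erase.mpr ⟨hvw.symm, hw⟩),
      card_erase_of_mem hv, hJ e heJ]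
    exact ⟨subset_univ _, rfl⟩
  · obtain ⟨-, hve, hwe⟩ := mem_filter.mp (mem_coe.mp he)
    obtain ⟨-, hvf, hwf⟩ := mem_filter.mp (mem_coe.mp hf)
    rw [← insert_erase hve, ← insert_erase (mem_erase.mpr ⟨hvw.symm, hwe⟩),
      ← insert_erase hvf, ← insert_erase (mem_erase.mpr ⟨hvw.symm, hwf⟩)]
    exact congrArg (fun s => insert v (insert w s)) hef

lemma exists_mem_disjoint_of_mul_lt {D : ℕ} {v : V} {U : Finset V}
    (hcodeg : ∀ w ∈ U, (J.filter fun e => v ∈ e ∧ w ∈ e).card ≤ D)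
    (h : U.card * D < degree J v) : ∃ e ∈ J, v ∈ e ∧ Disjoint e U := by
  by_contra! hcon
  refine h.not_ge ((card_le_card fun e he => ?_).trans
    (card_biUnion_le_card_mul U _ D hcodeg))
  obtain ⟨heJ, hve⟩ := mem_filter.mp he
  obtain ⟨w, hwe, hwU⟩ := not_disjoint_iff.mp (hcon e heJ hve)
  exact mem_biUnion.mpr ⟨w, hwU, mem_filter.mpr ⟨heJ, hve, hwe⟩⟩

lemma exists_matching_cover {k D : ℕ} (hJ : ∀ e ∈ J, e.card = k)
    (hcodeg : ∀ v w, v ≠ w → (J.filter fun e => v ∈ e ∧ w ∈ e).card ≤ D)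
    {C : Finset V} (hdeg : ∀ v ∈ C, C.card * k * D < degree J v) :
    ∃ M, IsMatching J M ∧ C ⊆ M.biUnion id ∧ M.card ≤ C.card := by
  suffices ∀ C' ⊆ C, ∃ M, IsMatching J M ∧ C' ⊆ M.biUnion id ∧ M.card ≤ C'.card from
    this C subset_rfl
  intro C' hC'
  induction C' using Finset.induction_on with
  | empty => exact ⟨∅, ⟨empty_subset _, by simp⟩, empty_subset _, le_rfl⟩
  | insert v C' hv ih =>
    obtain ⟨M, hM, hcov, hcard⟩ := ih ((subset_insert _ _).trans hC')
    rw [card_insert_of_notMem hv]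
    by_cases hvM : v ∈ M.biUnion id
    · exact ⟨M, hM, insert_subset hvM hcov, hcard.trans (Nat.le_succ _)⟩
    have hU : (M.biUnion id).card * D < degree J v :=
      calc (M.biUnion id).card * D ≤ M.card * k * D := Nat.mul_le_mul_right _
            (card_biUnion_le_card_mul _ _ _ fun e he => (hJ e (hM.1 he)).le)
        _ ≤ C.card * k * D := by
            gcongr
            exact hcard.trans (card_le_card ((subset_insert _ _).trans hC'))
        _ < degree J v := hdeg v (hC' (mem_insert_self _ _))
    obtain ⟨e, heJ, hve, hdisj⟩ := exists_mem_disjoint_of_mul_lt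
      (fun w hw => hcodeg v w (by rintro rfl; exact hvM hw)) hU
    refine ⟨insert e M, hM.insert heJ hdisj,
      insert_subset (mem_biUnion.mpr ⟨e, mem_insert_self _ _, hve⟩)
        (hcov.trans (biUnion_subset_biUnion_of_subset_left _ (subset_insert _ _))), ?_⟩
    rw [card_insert_of_disjoint_biUnion ⟨v, hve⟩ hdisj]
    omega

end Degree

section Profile

variable [DecidableEq V] {A B : Finset V} {a b : ℕ}

def profileSets (A B : Finset V) (a b : ℕ) : Finset (Finset V) :=
  (A.powersetCard a ×ˢ B.powersetCard b).image fun p => p.1 ∪ p.2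

def nonEdges (A B : Finset V) (J : Finset (Finset V)) : Finset (Finset V) :=
  profileSets A B 3 2 \ J

lemma union_inter_eq_of_disjoint (hAB : Disjoint A B) {S P : Finset V} (hS : S ⊆ A)
    (hP : P ⊆ B) : (S ∪ P) ∩ A = S := by
  rw [union_inter_distrib_right, inter_eq_left.mpr hS,
    disjoint_iff_inter_eq_empty.mp (hAB.symm.mono_left hP), union_empty]

lemma mem_profileSets (hAB : Disjoint A B) {e : Finset V} :
    e ∈ profileSets A B a b ↔ e ⊆ A ∪ B ∧ (e ∩ A).card = a ∧ (e ∩ B).card = b := by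
  constructor
  · intro he
    obtain ⟨⟨S, P⟩, hSP, rfl⟩ := mem_image.mp he
    obtain ⟨⟨hSA, hS⟩, hPB, hP⟩ := by simpa only [mem_product, mem_powersetCard] using hSP
    refine ⟨union_subset_union hSA hPB, ?_, ?_⟩
    · rw [union_inter_eq_of_disjoint hAB hSA hPB, hS]
    · rw [union_comm, union_inter_eq_of_disjoint hAB.symm hPB hSA, hP]
  · rintro ⟨he, ha, hb⟩
    refine mem_image.mpr ⟨(e ∩ A, e ∩ B), ?_, ?_⟩
    · simp only [mem_product, mem_powersetCard]
      exact ⟨⟨inter_subset_right, ha⟩, inter_subset_right, hb⟩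
    · rw [← inter_union_distrib_left, inter_eq_left.mpr he]

lemma subset_union_of_mem_profileSets {e : Finset V} (he : e ∈ profileSets A B a b) :
    e ⊆ A ∪ B := by
  obtain ⟨⟨S, P⟩, hSP, rfl⟩ := mem_image.mp he
  simp only [mem_product, mem_powersetCard] at hSP
  exact union_subset_union hSP.1.1 hSP.2.1

lemma card_of_mem_profileSets (hAB : Disjoint A B) {e : Finset V}
    (he : e ∈ profileSets A B a b) : e.card = a + b := by
  obtain ⟨heAB, ha, hb⟩ := (mem_profileSets hAB).mp he
  rw [← ha, ← hb, ← card_union_of_disjoint (hAB.mono inter_subset_right inter_subset_right),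
    ← inter_union_distrib_left, inter_eq_left.mpr heAB]

lemma card_profileSets (hAB : Disjoint A B) :
    (profileSets A B a b).card = A.card.choose a * B.card.choose b := by
  rw [profileSets, card_image_of_injOn, card_product, card_powersetCard, card_powersetCard]
  rintro ⟨S, P⟩ hSP ⟨S', P'⟩ hSP' h
  simp only [mem_coe, mem_product, mem_powersetCard] at hSP hSP'
  simp only at h
  refine Prod.ext ?_ ?_
  · rw [← union_inter_eq_of_disjoint hAB hSP.1.1 hSP.2.1, h,
      union_inter_eq_of_disjoint hAB hSP'.1.1 hSP'.2.1]
  · rw [← union_inter_eq_of_disjoint hAB.symm hSP.2.1 hSP.1.1, union_comm, h, union_comm,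
      union_inter_eq_of_disjoint hAB.symm hSP'.2.1 hSP'.1.1]

lemma profileSets_mono {A' B' : Finset V} (hA : A' ⊆ A) (hB : B' ⊆ B) :
    profileSets A' B' a b ⊆ profileSets A B a b :=
  image_subset_image (product_subset_product (powersetCard_mono hA) (powersetCard_mono hB))

lemma profileSets_sdiff_subset_sdiff {J : Finset (Finset V)} {U : Finset V}
    (hfree : ∀ e ∈ J, ¬ Disjoint e U) :
    profileSets (A \ U) (B \ U) a b ⊆ profileSets A B a b \ J := fun e he =>
  mem_sdiff.mpr ⟨profileSets_mono sdiff_subset sdiff_subset he, fun heJ => hfree e heJ <|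
    disjoint_of_subset_left ((subset_union_of_mem_profileSets he).trans
      (union_sdiff_distrib A B U).ge) sdiff_disjoint⟩

lemma pow_three_le_choose (k : ℕ) : k ^ 3 ≤ (3 * k).choose 3 := by
  obtain _ | m := k
  · simp
  have h : (3 * m + 1) * ((3 * m + 2) * (3 * m + 3)) = 6 * (3 * m + 3).choose 3 := by
    simpa [Nat.descFactorial_succ, Nat.factorial] using
      Nat.descFactorial_eq_factorial_mul_choose (3 * m + 3) 3
  rw [show 3 * (m + 1) = 3 * m + 3 by ring]
  nlinarith

lemma pow_two_le_choose (k : ℕ) : k ^ 2 ≤ (2 * k).choose 2 := by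
  obtain _ | m := k
  · simp
  have h : (2 * m + 1) * (2 * m + 2) = 2 * (2 * m + 2).choose 2 := by
    simpa [Nat.descFactorial_succ, Nat.factorial] using
      Nat.descFactorial_eq_factorial_mul_choose (2 * m + 2) 2
  rw [show 2 * (m + 1) = 2 * m + 2 by ring]
  nlinarith

lemma choose_mul_choose_le (n : ℕ) : (3 * n).choose 3 * (2 * n).choose 2 ≤ 108 * n ^ 5 :=
  calc (3 * n).choose 3 * (2 * n).choose 2 ≤ (3 * n) ^ 3 * (2 * n) ^ 2 :=
        Nat.mul_le_mul (Nat.choose_le_pow _ _) (Nat.choose_le_pow _ _)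
    _ = 108 * n ^ 5 := by ring

lemma pow_five_le_card_nonEdges (hAB : Disjoint A B) {J : Finset (Finset V)} {U : Finset V}
    {k : ℕ} (hA : (A \ U).card = 3 * k) (hB : (B \ U).card = 2 * k)
    (hfree : ∀ e ∈ J, ¬ Disjoint e U) : k ^ 5 ≤ (nonEdges A B J).card :=
  calc k ^ 5 = k ^ 3 * k ^ 2 := by ring
    _ ≤ (3 * k).choose 3 * (2 * k).choose 2 :=
        Nat.mul_le_mul (pow_three_le_choose k) (pow_two_le_choose k)
    _ = (profileSets (A \ U) (B \ U) 3 2).card := by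
        rw [card_profileSets (hAB.mono sdiff_subset sdiff_subset), hA, hB]
    _ ≤ _ := card_le_card (profileSets_sdiff_subset_sdiff hfree)

end Profile

lemma injective_of_mem_piFinset {ι α : Type*} [DecidableEq ι] [Fintype ι] {S : ι → Finset α}
    (hS : Pairwise (Disjoint on S)) {t : ι → α} (ht : t ∈ Fintype.piFinset S) : Injective t :=
  fun i i' h => by_contra fun hne =>
    disjoint_left.mp (hS hne) (Fintype.mem_piFinset.mp ht i) (h ▸ Fintype.mem_piFinset.mp ht i')

lemma exists_pairwise_disjoint_subsets {α : Type*} [DecidableEq α] (q : ℕ) :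
    ∀ {m : ℕ} {s : Finset α}, m * q ≤ s.card →
      ∃ S : Fin m → Finset α,
        (∀ i, S i ⊆ s ∧ (S i).card = q) ∧ Pairwise (Disjoint on S)
  | 0, _, _ => ⟨Fin.elim0, fun i => i.elim0, fun i => i.elim0⟩
  | m + 1, s, h => by
    rw [Nat.succ_mul] at h
    obtain ⟨T, hTs, hT⟩ := exists_subset_card_eq (show q ≤ s.card by omega)
    obtain ⟨S, hS, hSd⟩ := exists_pairwise_disjoint_subsets q (m := m) (s := s \ T)
      (by rw [card_sdiff_of_subset hTs, hT]; omega)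
    have hTS : ∀ i, Disjoint T (S i) := fun i => disjoint_sdiff.mono_right (hS i).1
    refine ⟨Matrix.vecCons T S, fun i => ?_, fun i j hij => ?_⟩
    · induction i using Fin.cases with
      | zero => exact ⟨hTs, hT⟩
      | succ i => exact ⟨(hS i).1.trans sdiff_subset, (hS i).2⟩
    · induction i using Fin.cases <;> induction j using Fin.cases <;>
        simp only [onFun, Matrix.cons_val_zero, Matrix.cons_val_succ]
      · exact absurd rfl hij
      · exact hTS _
      · exact (hTS _).symm
      · exact hSd fun h => hij (congrArg Fin.succ h)

section Switching

variable {A B : Finset V}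

def IsLabelling (A B X : Finset V) (w : Fin 5 → V) : Prop :=
  Injective w ∧ ∀ p, w p ∈ X ∧ w p ∈ if (p : ℕ) < 3 then A else B

lemma IsLabelling.mem_left_iff (hAB : Disjoint A B) {X : Finset V} {w : Fin 5 → V}
    (hw : IsLabelling A B X w) (p : Fin 5) : w p ∈ A ↔ (p : ℕ) < 3 := by
  have hp := (hw.2 p).2
  split_ifs at hp with h
  · exact ⟨fun _ => h, fun _ => hp⟩
  · exact ⟨fun hA => absurd hp (disjoint_left.mp hAB hA), fun h' => absurd h' h⟩

lemma IsLabelling.mem_right_iff (hAB : Disjoint A B) {X : Finset V} {w : Fin 5 → V}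
    (hw : IsLabelling A B X w) (p : Fin 5) : w p ∈ B ↔ ¬ (p : ℕ) < 3 := by
  have hp := (hw.2 p).2
  split_ifs at hp with h
  · exact ⟨fun hB => absurd hB (disjoint_left.mp hAB hp), fun h' => absurd h h'⟩
  · exact ⟨fun _ => h, fun _ => hp⟩

variable {E : Fin 5 → Finset V} {w : Fin 5 → Fin 5 → V}
  {J M : Finset (Finset V)} {R : Finset V} {r : Fin 5 → V} {lab : Finset V → Fin 5 → V}
  {S : Fin 4 → Finset (Finset V)}

lemma injective_uncurry_of_isLabelling (hw : ∀ g, IsLabelling A B (E g) (w g))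
    (hE : Pairwise (Disjoint on E)) : Injective (uncurry w) := by
  rintro ⟨g, p⟩ ⟨g', p'⟩ h
  simp only [uncurry_apply_pair] at h
  obtain rfl : g = g' := by
    by_contra hne
    exact disjoint_left.mp (hE hne) ((hw g).2 p).1 (h ▸ ((hw g').2 p').1)
  rw [(hw g).1 h]

lemma isLabelling_vecCons (hr : IsLabelling A B R r) (hlab : ∀ e ∈ M, IsLabelling A B e (lab e))
    {t : Fin 4 → Finset V} (ht : ∀ i, t i ∈ M) :
    ∀ g, IsLabelling A B (Matrix.vecCons R t g) (Matrix.vecCons r (lab ∘ t) g) :=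
  fun g => Fin.cases hr (fun i => hlab _ (ht i)) g

variable [DecidableEq V]

lemma exists_labelling (hAB : Disjoint A B) {X : Finset V} (hA : 3 ≤ (X ∩ A).card)
    (hB : 2 ≤ (X ∩ B).card) : ∃ w, IsLabelling A B X w := by
  obtain ⟨f, hf⟩ := Embedding.exists_of_card_le_finset (α := Fin 3) (by simpa using hA)
  obtain ⟨g, hg⟩ := Embedding.exists_of_card_le_finset (α := Fin 2) (by simpa using hB)
  have hfA : ∀ i, f i ∈ X ∩ A := fun i => hf (Set.mem_range_self i)
  have hgB : ∀ i, g i ∈ X ∩ B := fun i => hg (Set.mem_range_self i)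
  refine ⟨Fin.append f g, Fin.append_injective_iff.mpr ⟨f.injective, g.injective,
    fun i j hij => disjoint_left.mp hAB (mem_inter.mp (hfA i)).2
      (hij ▸ (mem_inter.mp (hgB j)).2)⟩,
    fun p => Fin.addCases (m := 3) (n := 2) (fun i => ?_) (fun i => ?_) p⟩
  · simpa [Fin.append_left, i.isLt] using hfA i
  · simpa [Fin.append_right] using hgB i

/-- Row `g` contributes slot `j + g`; for every `j`, exactly three of these slots are below `3`,
which makes each diagonal of a labelled grid a (3,2)-set. -/
def cyclicDiagonal (w : Fin 5 → Fin 5 → V) (j : Fin 5) : Finset V :=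
  univ.image fun g => w g (j + g)

lemma mem_cyclicDiagonal_self (w : Fin 5 → Fin 5 → V) (j : Fin 5) :
    w 0 j ∈ cyclicDiagonal w j :=
  mem_image.mpr ⟨0, mem_univ _, by rw [add_zero]⟩

lemma card_cyclicDiagonal_le (w : Fin 5 → Fin 5 → V) (j : Fin 5) :
    (cyclicDiagonal w j).card ≤ 5 :=
  card_image_le.trans (by simp)

lemma cyclicDiagonal_mem_profileSets (hAB : Disjoint A B) (hw : ∀ g, IsLabelling A B (E g) (w g))
    (hE : Pairwise (Disjoint on E)) (j : Fin 5) : cyclicDiagonal w j ∈ profileSets A B 3 2 := by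
  have hinj : Injective fun g => w g (j + g) := fun g g' h =>
    congrArg Prod.fst (injective_uncurry_of_isLabelling hw hE (a₁ := (g, j + g))
      (a₂ := (g', j + g')) h)
  have hcard (C : Finset V) (P : Fin 5 → Prop) [DecidablePred P]
      (hP : ∀ g, w g (j + g) ∈ C ↔ P g) :
      (cyclicDiagonal w j ∩ C).card = (univ.filter P).card := by
    rw [cyclicDiagonal, ← filter_mem_eq_inter, filter_image, card_image_of_injective _ hinj]
    exact congrArg card (filter_congr fun g _ => hP g)
  have hslotsA : ∀ j : Fin 5, (univ.filter fun g => ((j + g : Fin 5) : ℕ) < 3).card = 3 := by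
    decide
  have hslotsB : ∀ j : Fin 5, (univ.filter fun g => ¬ ((j + g : Fin 5) : ℕ) < 3).card = 2 := by
    decide
  refine (mem_profileSets hAB).mpr ⟨fun x hx => ?_, ?_, ?_⟩
  · obtain ⟨g, -, rfl⟩ := mem_image.mp hx
    have hslot := ((hw g).2 (j + g)).2
    split_ifs at hslot
    exacts [mem_union_left _ hslot, mem_union_right _ hslot]
  · rw [hcard A _ fun g => (hw g).mem_left_iff hAB (j + g), hslotsA]
  · rw [hcard B _ fun g => (hw g).mem_right_iff hAB (j + g), hslotsB]

lemma disjoint_cyclicDiagonal (hw : ∀ g, IsLabelling A B (E g) (w g))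
    (hE : Pairwise (Disjoint on E)) {j j' : Fin 5} (h : j ≠ j') :
    Disjoint (cyclicDiagonal w j) (cyclicDiagonal w j') := by
  refine disjoint_left.mpr fun x hx hx' => h ?_
  obtain ⟨g, -, rfl⟩ := mem_image.mp hx
  obtain ⟨g', -, hg'⟩ := mem_image.mp hx'
  obtain ⟨rfl, hslot⟩ := Prod.mk.inj (injective_uncurry_of_isLabelling hw hE
    (a₁ := (g', j' + g')) (a₂ := (g, j + g)) hg')
  exact (add_right_cancel hslot).symm

def gridDiagonal (r : Fin 5 → V) (lab : Finset V → Fin 5 → V) (t : Fin 4 → Finset V)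
    (j : Fin 5) : Finset V :=
  cyclicDiagonal (Matrix.vecCons r (lab ∘ t)) j

lemma pairwise_disjoint_vecCons (hM : IsMatching J M) (hR : Disjoint R (M.biUnion id))
    {t : Fin 4 → Finset V} (ht : ∀ i, t i ∈ M) (htinj : Injective t) :
    Pairwise (Disjoint on Matrix.vecCons R t) := by
  have hRt : ∀ i, Disjoint R (t i) := fun i => hR.mono_right (subset_biUnion_of_mem id (ht i))
  intro g g' hne
  induction g using Fin.cases <;> induction g' using Fin.cases <;>
    simp only [onFun, Matrix.cons_val_zero, Matrix.cons_val_succ]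
  · exact absurd rfl hne
  · exact hRt _
  · exact (hRt _).symm
  · exact hM.2 (ht _) (ht _) (htinj.ne fun h => hne (congrArg Fin.succ h))

lemma card_filter_gridDiagonal_not_mem_le (hAB : Disjoint A B) (hM : IsMatching J M)
    (hR : Disjoint R (M.biUnion id)) (hr : IsLabelling A B R r)
    (hlab : ∀ e ∈ M, IsLabelling A B e (lab e)) (hSM : ∀ i, S i ⊆ M)
    (hS : Pairwise (Disjoint on S)) (j : Fin 5) :
    ((Fintype.piFinset S).filter fun t => gridDiagonal r lab t j ∉ J).card
      ≤ 625 * degree (nonEdges A B J) (r j) := by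
  have htM : ∀ t ∈ Fintype.piFinset S, ∀ i, t i ∈ M := fun t ht i =>
    hSM i (Fintype.mem_piFinset.mp ht i)
  -- A diagonal meets each edge `t i`, and a 5-set meets at most five edges of the matching `M`.
  refine (card_le_mul_card_image (f := fun t => gridDiagonal r lab t j) _ 625
    fun a ha => ?_).trans
    (Nat.mul_le_mul_left _ (card_le_card fun a ha => ?_))
  · obtain ⟨t₀, -, rfl⟩ := mem_image.mp ha
    calc _ ≤ (Fintype.piFinset fun _ : Fin 4 => M.filter fun e => ¬ Disjoint e
            (gridDiagonal r lab t₀ j)).card := by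
          refine card_le_card fun t ht => Fintype.mem_piFinset.mpr fun i => ?_
          obtain ⟨⟨htS, -⟩, hta⟩ := by simpa only [mem_filter] using ht
          rw [← hta]
          exact mem_filter.mpr ⟨htM t htS i, not_disjoint_iff.mpr ⟨_,
            ((hlab _ (htM t htS i)).2 (j + i.succ)).1,
            mem_image.mpr ⟨i.succ, mem_univ _, rfl⟩⟩⟩
      _ ≤ 5 ^ (univ : Finset (Fin 4)).card := by
          rw [Fintype.card_piFinset]
          exact prod_le_pow_card _ _ _ fun i _ =>
            (card_filter_not_disjoint_le hM.2 _).trans (card_cyclicDiagonal_le _ _)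
      _ = 625 := by simp
  · obtain ⟨t, ht, rfl⟩ := mem_image.mp ha
    obtain ⟨htS, hbad⟩ := mem_filter.mp ht
    have htinj := injective_of_mem_piFinset hS htS
    exact mem_filter.mpr ⟨mem_sdiff.mpr ⟨cyclicDiagonal_mem_profileSets hAB
      (isLabelling_vecCons hr hlab (htM t htS))
      (pairwise_disjoint_vecCons hM hR (htM t htS) htinj) j, hbad⟩, mem_cyclicDiagonal_self _ j⟩

lemma exists_forall_gridDiagonal_mem (hAB : Disjoint A B) (hM : IsMatching J M)
    (hR : Disjoint R (M.biUnion id)) (hr : IsLabelling A B R r)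
    (hlab : ∀ e ∈ M, IsLabelling A B e (lab e)) (hSM : ∀ i, S i ⊆ M)
    (hS : Pairwise (Disjoint on S))
    (hcount : 625 * ∑ j, degree (nonEdges A B J) (r j) < ∏ i, (S i).card) :
    ∃ t ∈ Fintype.piFinset S, ∀ j, gridDiagonal r lab t j ∈ J := by
  by_contra! h
  refine hcount.not_ge ?_
  calc ∏ i, (S i).card = (Fintype.piFinset S).card := (Fintype.card_piFinset S).symm
    _ ≤ (univ.biUnion fun j => (Fintype.piFinset S).filter fun t =>
          gridDiagonal r lab t j ∉ J).card := card_le_card fun t ht => by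
        obtain ⟨j, hj⟩ := h t ht
        exact mem_biUnion.mpr ⟨j, mem_univ _, mem_filter.mpr ⟨ht, hj⟩⟩
    _ ≤ ∑ j, ((Fintype.piFinset S).filter fun t =>
          gridDiagonal r lab t j ∉ J).card := card_biUnion_le
    _ ≤ ∑ j, 625 * degree (nonEdges A B J) (r j) :=
        sum_le_sum fun j _ => card_filter_gridDiagonal_not_mem_le hAB hM hR hr hlab hSM hS j
    _ = 625 * ∑ j, degree (nonEdges A B J) (r j) := (mul_sum _ _ _).symm

theorem exists_matching_card_eq_succ (hAB : Disjoint A B) (hJ : J ⊆ profileSets A B 3 2)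
    (hM : IsMatching J M) (hR : Disjoint R (M.biUnion id)) (hr : IsLabelling A B R r)
    (hSM : ∀ i, S i ⊆ M) (hS : Pairwise (Disjoint on S))
    (hcount : 625 * ∑ j, degree (nonEdges A B J) (r j) < ∏ i, (S i).card) :
    ∃ Q, IsMatching J Q ∧ M \ univ.biUnion S ⊆ Q ∧ Q.card = M.card + 1 := by
  have hlab : ∀ e ∈ M, ∃ w, IsLabelling A B e w := fun e he => by
    obtain ⟨-, h3, h2⟩ := (mem_profileSets hAB).mp (hJ (hM.1 he))
    exact exists_labelling hAB h3.ge h2.ge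
  have : Nonempty (Fin 5 → V) := ⟨r⟩
  choose! lab hlab using hlab
  obtain ⟨t, htS, hgood⟩ := exists_forall_gridDiagonal_mem hAB hM hR hr hlab hSM hS hcount
  have htM : ∀ i, t i ∈ M := fun i => hSM i (Fintype.mem_piFinset.mp htS i)
  have htinj := injective_of_mem_piFinset hS htS
  have hw := isLabelling_vecCons hr hlab htM
  have hE := pairwise_disjoint_vecCons hM hR htM htinj
  set part := gridDiagonal r lab t
  have hroot : ∀ j, r j ∈ part j := mem_cyclicDiagonal_self _
  have hpartinj : Injective part := fun j j' h => by_contra fun hne =>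
    disjoint_left.mp (disjoint_cyclicDiagonal hw hE hne) (hroot j)
      (show r j ∈ part j' from h ▸ hroot j)
  have hTM : univ.image t ⊆ M := image_subset_iff.mpr fun i _ => htM i
  have hpart : (univ.image part).biUnion id ⊆ (univ.image t).biUnion id ∪ R := by
    intro x hx
    obtain ⟨_, hp, hxp⟩ := mem_biUnion.mp hx
    obtain ⟨j, -, rfl⟩ := mem_image.mp hp
    obtain ⟨g, -, rfl⟩ := mem_image.mp hxp
    have hmem := ((hw g).2 (j + g)).1
    induction g using Fin.cases with
    | zero => exact mem_union_right _ hmem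
    | succ i =>
      exact mem_union_left _ (mem_biUnion.mpr ⟨t i, mem_image_of_mem _ (mem_univ _), hmem⟩)
  refine ⟨M \ univ.image t ∪ univ.image part, hM.sdiff_union ⟨image_subset_iff.mpr
    fun j _ => hgood j, ?_⟩ hTM hpart hR, fun f hf => ?_, ?_⟩
  · intro x hx y hy hxy
    obtain ⟨j, -, rfl⟩ := mem_image.mp hx
    obtain ⟨j', -, rfl⟩ := mem_image.mp hy
    exact disjoint_cyclicDiagonal hw hE fun h => hxy (h ▸ rfl)
  · obtain ⟨hfM, hfS⟩ := mem_sdiff.mp hf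
    refine mem_union_left _ (mem_sdiff.mpr ⟨hfM, fun hfT => hfS ?_⟩)
    obtain ⟨i, -, rfl⟩ := mem_image.mp hfT
    exact mem_biUnion.mpr ⟨i, mem_univ _, Fintype.mem_piFinset.mp htS i⟩
  · have hmeet : ∀ p ∈ univ.image part, ¬ Disjoint p R := fun p hp => by
      obtain ⟨j, -, rfl⟩ := mem_image.mp hp
      exact not_disjoint_iff.mpr ⟨r j, hroot j, (hr.2 j).1⟩
    have h4 := card_le_card hTM
    rw [card_image_of_injective _ htinj, card_univ, Fintype.card_fin] at h4
    rw [card_sdiff_union hTM hmeet hR, card_image_of_injective _ htinj,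
      card_image_of_injective _ hpartinj, card_univ, card_univ, Fintype.card_fin,
      Fintype.card_fin]
    omega

end Switching

section Numerics

variable {n : ℕ}

lemma le_div_of_pow_five_le {k : ℕ} (h : (k : ℝ) ^ 5 ≤ n ^ 5 / 10 ^ 22) :
    (k : ℝ) ≤ n / 10 ^ 4 := by
  refine le_of_pow_le_pow_left₀ (n := 5) (by norm_num) (by positivity) (h.trans ?_)
  rw [div_pow]
  gcongr
  norm_num

lemma four_mul_div_five_le {k m : ℕ} (hk : (k : ℝ) ≤ n / 10 ^ 4)
    (hm : (m : ℝ) ≤ n / 10 ^ 13) :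
    4 * (n / 5) ≤ n - k - m := by
  have : ((5 * (k + m) : ℕ) : ℝ) ≤ n := by
    push_cast
    nlinarith [(n.cast_nonneg : (0 : ℝ) ≤ n)]
  have : 5 * (k + m) ≤ n := by exact_mod_cast this
  omega

lemma mul_sum_lt_div_five_pow (hn : 30 ≤ n) (d : Fin 5 → ℕ)
    (hd : ∀ j, (d j : ℝ) ≤ n ^ 4 / 10 ^ 8) : 625 * ∑ j, d j < (n / 5) ^ 4 := by
  have hn' : (30 : ℝ) ≤ n := by exact_mod_cast hn
  have hq : (n : ℝ) / 6 ≤ (n / 5 : ℕ) := by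
    have : ((n : ℕ) : ℝ) ≤ ((5 * (n / 5) + 4 : ℕ) : ℝ) :=
      Nat.cast_le.mpr (by omega)
    push_cast at this
    linarith
  have hsum : (∑ j, d j : ℝ) ≤ 5 * (n ^ 4 / 10 ^ 8) :=
    calc _ ≤ ∑ _j : Fin 5, ((n : ℝ) ^ 4 / 10 ^ 8) := sum_le_sum fun j _ => hd j
      _ = _ := by simp
  have : ((625 * ∑ j, d j : ℕ) : ℝ) < ((n / 5 : ℕ) : ℝ) ^ 4 :=
    calc ((625 * ∑ j, d j : ℕ) : ℝ) ≤ 625 * (5 * (n ^ 4 / 10 ^ 8)) := by push_cast; gcongr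
      _ < ((n : ℝ) / 6) ^ 4 := by nlinarith [pow_pos (by linarith : (0 : ℝ) < n) 4]
      _ ≤ _ := by gcongr
  exact_mod_cast this

end Numerics

section PerfectMatching

variable [DecidableEq V] [Fintype V] {A B : Finset V} {J M M₀ : Finset (Finset V)} {n : ℕ}

theorem card_eq_of_forall_card_le (hn : 30 ≤ n) (hAB : Disjoint A B) (hA : A.card = 3 * n)
    (hB : B.card = 2 * n) (hJ : J ⊆ profileSets A B 3 2)
    (hN : ((nonEdges A B J).card : ℝ) ≤ n ^ 5 / 10 ^ 22)
    (hM : IsMatching J M) (hM₀M : M₀ ⊆ M) (hM₀ : (M₀.card : ℝ) ≤ n / 10 ^ 13)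
    (hlow : ∀ v ∉ M₀.biUnion id, (degree (nonEdges A B J) v : ℝ) ≤ n ^ 4 / 10 ^ 8)
    (hmax : ∀ Q, IsMatching J Q → M₀ ⊆ Q → Q.card ≤ M.card) : M.card = n := by
  have hMe : ∀ e ∈ M, (e ∩ A).card = 3 ∧ (e ∩ B).card = 2 := fun e he =>
    ((mem_profileSets hAB).mp (hJ (hM.1 he))).2
  have hle : M.card ≤ n := by
    have := (card_biUnion_inter hM.2 A fun e he => (hMe e he).1).symm.trans_le
      (card_le_card inter_subset_right)
    omega
  have hfreeA : (A \ M.biUnion id).card = 3 * (n - M.card) := by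
    rw [card_sdiff_biUnion hM.2 A fun e he => (hMe e he).1, hA]
    omega
  have hfreeB : (B \ M.biUnion id).card = 2 * (n - M.card) := by
    rw [card_sdiff_biUnion hM.2 B fun e he => (hMe e he).2, hB]
    omega
  by_contra hne
  have hfree : ∀ e ∈ J, ¬ Disjoint e (M.biUnion id) := fun e he hd => by
    have h := hmax _ (hM.insert he hd) (hM₀M.trans (subset_insert _ _))
    rw [card_insert_of_disjoint_biUnion (card_pos.mp (by
      rw [card_of_mem_profileSets hAB (hJ he)]; norm_num)) hd] at h
    omega
  have hk : ((n - M.card : ℕ) : ℝ) ≤ n / 10 ^ 4 := by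
    have := pow_five_le_card_nonEdges hAB hfreeA hfreeB hfree
    exact le_div_of_pow_five_le (le_trans (by exact_mod_cast this) hN)
  obtain ⟨S, hS, hSd⟩ := exists_pairwise_disjoint_subsets (n / 5) (m := 4) (s := M \ M₀)
    (by rw [card_sdiff_of_subset hM₀M]; have := four_mul_div_five_le hk hM₀; omega)
  have hR : ∀ X, (univ \ M.biUnion id ∩ X) = X \ M.biUnion id := fun X => by
    rw [sdiff_inter_right_comm, univ_inter]
  obtain ⟨r, hr⟩ := exists_labelling hAB (X := univ \ M.biUnion id)
    (by rw [hR, hfreeA]; omega) (by rw [hR, hfreeB]; omega)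
  obtain ⟨Q, hQ, hQM, hQcard⟩ := exists_matching_card_eq_succ hAB hJ hM sdiff_disjoint hr
    (fun i => (hS i).1.trans sdiff_subset) hSd (by
      simp only [hS, prod_const, card_univ, Fintype.card_fin]
      exact mul_sum_lt_div_five_pow hn _ fun j => hlow _ fun h =>
        (mem_sdiff.mp (hr.2 j).1).2 (biUnion_subset_biUnion_of_subset_left _ hM₀M h))
  have := hmax Q hQ fun e he => hQM (mem_sdiff.mpr ⟨hM₀M he, fun h => by
    obtain ⟨i, -, hi⟩ := mem_biUnion.mp h
    exact (mem_sdiff.mp ((hS i).1 hi)).2 he⟩)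
  omega

theorem exists_perfect_matching (hn : 30 ≤ n) (hAB : Disjoint A B) (hABu : A ∪ B = univ)
    (hA : A.card = 3 * n) (hB : B.card = 2 * n) (hJ : J ⊆ profileSets A B 3 2)
    (hN : ((nonEdges A B J).card : ℝ) ≤ n ^ 5 / 10 ^ 22)
    (hdeg : ∀ v, (n : ℝ) ^ 4 / 10 ^ 8 ≤ degree J v) :
    ∃ M, IsMatching J M ∧ M.biUnion id = univ := by
  have hJ5 : ∀ e ∈ J, e.card = 3 + 2 := fun e he => card_of_mem_profileSets hAB (hJ he)
  have hV : Fintype.card V = 5 * n := by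
    rw [← card_univ, ← hABu, card_union_of_disjoint hAB, hA, hB]
    ring
  have hn' : (0 : ℝ) < n := by exact_mod_cast (show 0 < n by omega)
  set Bad := univ.filter fun v => (n : ℝ) ^ 4 / 10 ^ 8 < degree (nonEdges A B J) v
  have hBad : (Bad.card : ℝ) ≤ n / 10 ^ 13 := by
    have hsum : (Bad.card : ℝ) * (n ^ 4 / 10 ^ 8) ≤ (nonEdges A B J).card * (3 + 2 : ℕ) :=
      card_filter_lt_degree_mul_le (fun e he => card_of_mem_profileSets hAB (mem_sdiff.mp he).1) _
    by_contra! h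
    have := mul_lt_mul_of_pos_right h (by positivity : (0 : ℝ) < n ^ 4 / 10 ^ 8)
    push_cast at hsum
    nlinarith [pow_pos hn' 5]
  obtain ⟨M₀, hM₀, hBadM₀, hM₀Bad⟩ := exists_matching_cover (k := 5)
    (D := (5 * n) ^ 3) hJ5 (fun v w hvw => hV ▸ (card_filter_mem_mem_le hJ5 hvw).trans
      (Nat.choose_le_pow _ _)) (C := Bad) fun v _ => by
        have : ((Bad.card * 5 * (5 * n) ^ 3 : ℕ) : ℝ) < degree J v := by
          push_cast
          calc (Bad.card : ℝ) * 5 * (5 * n) ^ 3 ≤ n / 10 ^ 13 * 5 * (5 * (n : ℝ)) ^ 3 := by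
                gcongr
            _ < (n : ℝ) ^ 4 / 10 ^ 8 := by nlinarith [pow_pos hn' 4]
            _ ≤ degree J v := hdeg v
        exact_mod_cast this
  obtain ⟨M, hM, hM₀M, hmax⟩ := exists_max_matching_superset hM₀
  have hMn := card_eq_of_forall_card_le hn hAB hA hB hJ hN hM hM₀M
    ((Nat.cast_le.mpr hM₀Bad).trans hBad)
    (fun v hv => not_lt.mp fun h => hv (hBadM₀ (mem_filter.mpr ⟨mem_univ _, h⟩))) hmax
  refine ⟨M, hM, eq_univ_of_card _ ?_⟩
  have := card_biUnion_inter hM.2 univ fun e he => by rw [inter_univ]; exact hJ5 e (hM.1 he)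
  rw [inter_univ] at this
  rw [this, hMn, hV]
  ring

end PerfectMatching

/-- There is `β0 > 0` such that for every `0 < β < β0` there is `n0` such that for all
`n ≥ n0`: if `A`, `B` partition a vertex set of size `5n` with `|A| = 3n`, `|B| = 2n`,
and `J` is a 5-graph in which every edge has 3 vertices in `A` and 2 in `B`, with at
least `(1-β)·C(3n,3)·C(2n,2)` edges, and every vertex is in at least `n⁴/10⁸` edges,
then `J` has a perfect matching. -/
theorem auxiliary_matching :
    ∃ β0 : ℝ, 0 < β0 ∧ ∀ β : ℝ, 0 < β → β < β0 →
      ∃ n0 : ℕ, ∀ n : ℕ, n0 ≤ n →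
        ∀ A B : Finset (Fin (5 * n)),
          Disjoint A B → A ∪ B = Finset.univ → A.card = 3 * n → B.card = 2 * n →
          ∀ J : Finset (Finset (Fin (5 * n))),
            (∀ e ∈ J, e.card = 5 ∧ (e ∩ A).card = 3 ∧ (e ∩ B).card = 2) →
            (1 - β) * ((3 * n).choose 3 : ℝ) * ((2 * n).choose 2 : ℝ) ≤ (J.card : ℝ) →
            (∀ v : Fin (5 * n),
              (n : ℝ) ^ 4 / 10 ^ 8 ≤ ((J.filter fun e => v ∈ e).card : ℝ)) →
            ∃ M ⊆ J, (M : Set (Finset (Fin (5 * n)))).PairwiseDisjoint id ∧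
              M.biUnion id = Finset.univ := by
  refine ⟨1 / 10 ^ 25, by norm_num, fun β _ hβ => ⟨30, fun n hn A B hAB hABu hA hB J hJ hJcard
    hdeg => ?_⟩⟩
  have hJp : J ⊆ profileSets A B 3 2 := fun e he =>
    (mem_profileSets hAB).mpr ⟨hABu ▸ subset_univ e, (hJ e he).2⟩
  have hN : ((nonEdges A B J).card : ℝ) ≤ n ^ 5 / 10 ^ 22 := by
    have hC : ((3 * n).choose 3 * (2 * n).choose 2 : ℝ) ≤ 108 * n ^ 5 := by
      exact_mod_cast choose_mul_choose_le n
    rw [nonEdges, card_sdiff_of_subset hJp, Nat.cast_sub (card_le_card hJp),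
      card_profileSets hAB, hA, hB]
    push_cast
    nlinarith [(by positivity : (0 : ℝ) ≤ (3 * n).choose 3 * (2 * n).choose 2)]
  obtain ⟨M, hM, hcover⟩ := exists_perfect_matching hn hAB hABu hA hB hJp hN hdeg
  exact ⟨M, hM.1, hM.2, hcover⟩
end

section
/- For every α > 0 there exists η0 > 0 such that for every 0 < η < η0 there exists a natural number n0 such that the following holds for all n ≥ n0: if H is a 3-graph on n vertices with minimum codegree δ(H) ≥ n/3 + αn, then every vertex of V(H) is (η, 1)-linked in H to at least αn/2 vertices of V(H). -/
/-!
Write `N(x, y)` for the joint neighbourhood of a pair and `P(u, v) = ∑ₐ |N(a, u) ∩ N(a, v)|`.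
For `a ≠ u`, double counting gives `∑ᵥ |N(a, u) ∩ N(a, v)| = ∑_{w ∈ N(a, u)} |N(a, w)| ≥ δ²`, so
`∑ᵥ P(u, v) ≥ (n - 1) δ²`; as `P(u, v) ≤ n²` and `δ ≥ n/3 + αn`, averaging yields at least
`αn/2` vertices `v` with `P(u, v) ≥ n²/9`. For such `v`, averaging again gives `n/18` vertices `a`
with `|N(a, u) ∩ N(a, v)| ≥ n/18`. Any such `a`, distinct `c, d ∈ N(a, u) ∩ N(a, v)` and
`e ∈ N(c, d) \ {u, v, a}` form a 4-set `{a, c, d, e}` which `x = u` and `x = v` both complete to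
a copy of `T` with edges `axc`, `axd`, `cde`. There are `Ω(n⁴)` such quadruples and each 4-set
comes from at most `4⁴` of them, so `u` and `v` are `(η, 1)`-linked.
-/

open Finset

/-- `u` and `v` are `(η, r)`-linked in `H`. -/
def Linked {V : Type*} [DecidableEq V] [Fintype V] (H : Finset (Finset V)) (η : ℝ) (r : ℕ)
    (u v : V) : Prop :=
  η * ((Fintype.card V).choose (5 * r - 1) : ℝ) ≤
    (({S : Finset V | S.card = 5 * r - 1 ∧ HasPerfectTTilingOn H (insert u S) ∧
        HasPerfectTTilingOn H (insert v S)} : Set (Finset V)).ncard : ℝ)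

/-- `X` is `(η, r)`-closed in `H`. -/
def TClosed {V : Type*} [DecidableEq V] [Fintype V] (H : Finset (Finset V)) (η : ℝ) (r : ℕ)
    (X : Finset V) : Prop :=
  ∀ u ∈ X, ∀ v ∈ X, Linked H η r u v

section

lemma Finset.sum_le_card_filter_mul_add {ι : Type*} (s : Finset ι) (f : ι → ℝ) {M t : ℝ}
    (ht : 0 ≤ t) (hM : ∀ i ∈ s, f i ≤ M) :
    ∑ i ∈ s, f i ≤ #{i ∈ s | t ≤ f i} * M + #s * t := by
  rw [← sum_filter_add_sum_filter_not s (fun i => t ≤ f i)]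
  gcongr
  · rw [← nsmul_eq_mul]
    exact sum_le_card_nsmul _ _ _ fun i hi => hM i (mem_filter.1 hi).1
  · calc ∑ i ∈ s with ¬t ≤ f i, f i ≤ #{i ∈ s | ¬t ≤ f i} * t := by
          rw [← nsmul_eq_mul]
          exact sum_le_card_nsmul _ _ _ fun i hi => (not_le.1 (mem_filter.1 hi).2).le
      _ ≤ #s * t := by gcongr; exact filter_subset _ _

lemma Finset.le_card_sigma {ι : Type*} {κ : ι → Type*} {s : Finset ι} {t : ∀ i, Finset (κ i)}
    {x y : ℝ} (hx : x ≤ #s) (hy₀ : 0 ≤ y) (hy : ∀ i ∈ s, y ≤ #(t i)) :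
    x * y ≤ #(s.sigma t) := by
  rw [card_sigma, Nat.cast_sum]
  calc x * y ≤ #s * y := by gcongr
    _ ≤ ∑ i ∈ s, (#(t i) : ℝ) := by
      rw [← nsmul_eq_mul]
      exact card_nsmul_le_sum _ _ _ hy

lemma Finset.sum_card_inter_eq_sum_card_filter {ι α : Type*} [Fintype ι] [DecidableEq α]
    (s : Finset α) (t : ι → Finset α) :
    ∑ i, #(s ∩ t i) = ∑ a ∈ s, #{i | a ∈ t i} := by
  simp_rw [← filter_mem_eq_inter, card_eq_sum_ones, sum_filter]
  exact sum_comm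

end

section

variable {V : Type*} [DecidableEq V]

def quadSet (t : Σ _ : V, Σ _ : V, Σ _ : V, V) : Finset V :=
  {t.1, t.2.1, t.2.2.1, t.2.2.2}

lemma card_le_mul_card_image_quadSet (Q : Finset (Σ _ : V, Σ _ : V, Σ _ : V, V)) :
    #Q ≤ 4 ^ 4 * #(Q.image quadSet) := by
  refine card_le_mul_card_image Q _ fun b hb => ?_
  obtain ⟨t, -, rfl⟩ := mem_image.1 hb
  set b := quadSet t
  calc #{s ∈ Q | quadSet s = b} ≤ #(b ×ˢ b ×ˢ b ×ˢ b) := by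
        refine card_le_card_of_injOn (fun s => (s.1, s.2.1, s.2.2.1, s.2.2.2)) ?_ ?_
        · intro s hs
          simp [← (mem_filter.1 (mem_coe.1 hs)).2, quadSet]
        · rintro ⟨a, c, d, e⟩ - ⟨a', c', d', e'⟩ - h
          simp only [Prod.mk.injEq] at h
          obtain ⟨rfl, rfl, rfl, rfl⟩ := h
          rfl
    _ ≤ 4 ^ 4 := by
        have : #b ≤ 4 := card_le_four
        simp only [card_product]
        calc #b * (#b * (#b * #b)) ≤ 4 * (4 * (4 * 4)) := by gcongr
          _ = 4 ^ 4 := by norm_num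

lemma hasPerfectTTilingOn_of_supportsT {H : Finset (Finset V)} {W : Finset V}
    (h : SupportsT H W) : HasPerfectTTilingOn H W :=
  ⟨{W}, ⟨fun S hS => mem_singleton.1 hS ▸ h, by
    rw [coe_singleton]; exact Set.pairwiseDisjoint_singleton _ _⟩, by simp⟩

end

section

variable {V : Type*} [Fintype V] [DecidableEq V] {H : Finset (Finset V)}

def nbhd (H : Finset (Finset V)) (x y : V) : Finset V :=
  {w | w ≠ x ∧ w ≠ y ∧ ({x, y, w} : Finset V) ∈ H}

@[simp]
lemma mem_nbhd {x y w : V} : w ∈ nbhd H x y ↔ w ≠ x ∧ w ≠ y ∧ ({x, y, w} : Finset V) ∈ H := by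
  simp [nbhd]

lemma Is3Graph.ne_of_mem_nbhd (h3 : Is3Graph H) {x y w : V} (hw : w ∈ nbhd H x y) : x ≠ y := by
  rintro rfl
  obtain ⟨hwx, -, he⟩ := mem_nbhd.1 hw
  have := h3 _ he
  rw [insert_idem, card_pair hwx.symm] at this
  omega

lemma Is3Graph.mem_nbhd_comm (h3 : Is3Graph H) {a v w : V} :
    w ∈ nbhd H a v ↔ v ∈ nbhd H a w := by
  have key : ∀ {v w : V}, w ∈ nbhd H a v → v ∈ nbhd H a w := fun hw => by
    obtain ⟨-, hwv, he⟩ := mem_nbhd.1 hw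
    exact mem_nbhd.2 ⟨(h3.ne_of_mem_nbhd hw).symm, hwv.symm, by rwa [pair_comm]⟩
  exact ⟨key, key⟩

lemma Is3Graph.codeg_le_card_nbhd (h3 : Is3Graph H) {x y : V} (hxy : x ≠ y) :
    codeg H x y ≤ #(nbhd H x y) := by
  refine card_le_card_of_surjOn (fun w => ({x, y, w} : Finset V)) fun e he => ?_
  obtain ⟨heH, hx, hy⟩ := mem_filter.1 (mem_coe.1 he)
  have hy' : y ∈ e.erase x := mem_erase.2 ⟨hxy.symm, hy⟩
  obtain ⟨w, hw⟩ := card_eq_one.1 (show #((e.erase x).erase y) = 1 by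
    rw [card_erase_of_mem hy', card_erase_of_mem hx, h3 e heH])
  have hwe : w ∈ (e.erase x).erase y := hw ▸ mem_singleton_self w
  have he_eq : ({x, y, w} : Finset V) = e := by
    rw [← hw, insert_erase hy', insert_erase hx]
  simp only [mem_erase] at hwe
  exact ⟨w, mem_nbhd.2 ⟨hwe.2.1, hwe.1, he_eq ▸ heH⟩, he_eq⟩

lemma Is3Graph.sum_card_nbhd_inter_nbhd (h3 : Is3Graph H) (a u : V) :
    ∑ v, #(nbhd H a u ∩ nbhd H a v) = ∑ w ∈ nbhd H a u, #(nbhd H a w) := by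
  rw [sum_card_inter_eq_sum_card_filter]
  refine sum_congr rfl fun w _ => congrArg card (ext fun v => ?_)
  rw [mem_filter, h3.mem_nbhd_comm]
  exact and_iff_right (mem_univ v)

lemma Is3Graph.sq_le_sum_card_nbhd_inter_nbhd (h3 : Is3Graph H) {D : ℝ} (hD₀ : 0 ≤ D)
    (hD : ∀ x y, x ≠ y → D ≤ #(nbhd H x y)) {a u : V} (hau : a ≠ u) :
    D ^ 2 ≤ ∑ v, (#(nbhd H a u ∩ nbhd H a v) : ℝ) := by
  rw [← Nat.cast_sum, h3.sum_card_nbhd_inter_nbhd, Nat.cast_sum]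
  calc D ^ 2 ≤ #(nbhd H a u) * D := by rw [sq]; gcongr; exact hD a u hau
    _ ≤ ∑ w ∈ nbhd H a u, (#(nbhd H a w) : ℝ) := by
      rw [← nsmul_eq_mul]
      exact card_nsmul_le_sum _ _ _ fun w hw => hD a w (mem_nbhd.1 hw).1.symm

end

section

variable {V : Type*} [Fintype V] [DecidableEq V] {H : Finset (Finset V)}

def commonPairs (H : Finset (Finset V)) (u v : V) : ℕ :=
  ∑ a, #(nbhd H a u ∩ nbhd H a v)

lemma commonPairs_le_sq (H : Finset (Finset V)) (u v : V) :
    commonPairs H u v ≤ Fintype.card V ^ 2 :=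
  calc commonPairs H u v ≤ ∑ _a : V, Fintype.card V := sum_le_sum fun _ _ => card_le_univ _
    _ = Fintype.card V ^ 2 := by rw [sum_const, card_univ, smul_eq_mul, sq]

lemma Is3Graph.mul_sq_le_sum_commonPairs (h3 : Is3Graph H) {D : ℝ} (hD₀ : 0 ≤ D)
    (hD : ∀ x y, x ≠ y → D ≤ #(nbhd H x y)) (u : V) :
    (Fintype.card V - 1) * D ^ 2 ≤ ∑ v, (commonPairs H u v : ℝ) := by
  simp only [commonPairs, Nat.cast_sum]
  rw [sum_comm]
  calc (Fintype.card V - 1) * D ^ 2 = #(univ.erase u) * D ^ 2 := by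
        rw [card_erase_of_mem (mem_univ u), card_univ, Nat.cast_pred (Fintype.card_pos_iff.2 ⟨u⟩)]
    _ ≤ ∑ a ∈ univ.erase u, ∑ v, (#(nbhd H a u ∩ nbhd H a v) : ℝ) := by
        rw [← nsmul_eq_mul]
        exact card_nsmul_le_sum _ _ _ fun a ha =>
          h3.sq_le_sum_card_nbhd_inter_nbhd hD₀ hD (mem_erase.1 ha).1
    _ ≤ ∑ a, ∑ v, (#(nbhd H a u ∩ nbhd H a v) : ℝ) :=
        sum_le_sum_of_subset_of_nonneg (subset_univ _) fun _ _ _ => by positivity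

lemma Is3Graph.le_card_filter_commonPairs (h3 : Is3Graph H) {α : ℝ} (hα : 0 < α)
    (hn : 6 * (1 / 3 + α) ^ 2 ≤ α * Fintype.card V)
    (hD : ∀ x y, x ≠ y → (Fintype.card V : ℝ) / 3 + α * Fintype.card V ≤ #(nbhd H x y))
    (u : V) :
    α * Fintype.card V / 2 ≤ #{v | (Fintype.card V : ℝ) ^ 2 / 9 ≤ commonPairs H u v} := by
  have hn₀ : (0 : ℝ) < Fintype.card V := Nat.cast_pos.2 (Fintype.card_pos_iff.2 ⟨u⟩)
  have hlower := h3.mul_sq_le_sum_commonPairs (by positivity) hD u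
  have hupper := sum_le_card_filter_mul_add univ (fun v => (commonPairs H u v : ℝ))
    (M := (Fintype.card V : ℝ) ^ 2) (t := (Fintype.card V : ℝ) ^ 2 / 9) (by positivity)
    fun v _ => by exact_mod_cast commonPairs_le_sq H u v
  rw [card_univ] at hupper
  refine le_of_mul_le_mul_left ?_ (pow_pos hn₀ 2)
  nlinarith [mul_le_mul_of_nonneg_left hn (sq_nonneg (Fintype.card V : ℝ)),
    pow_pos hn₀ 3, mul_pos (pow_pos hn₀ 3) (pow_pos hα 2)]

lemma Is3Graph.hasPerfectTTilingOn_insert (h3 : Is3Graph H) {u a c d e : V}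
    (hc : c ∈ nbhd H a u) (hd : d ∈ nbhd H a u) (hdc : d ≠ c) (he : e ∈ nbhd H c d)
    (heu : e ≠ u) (hea : e ≠ a) : HasPerfectTTilingOn H (insert u {a, c, d, e}) := by
  have hau := h3.ne_of_mem_nbhd hc
  obtain ⟨hca, hcu, hac⟩ := mem_nbhd.1 hc
  obtain ⟨hda, hdu, had⟩ := mem_nbhd.1 hd
  obtain ⟨hec, hed, hcde⟩ := mem_nbhd.1 he
  refine hasPerfectTTilingOn_of_supportsT ⟨a, u, c, d, e, ?_, insert_comm a u _, hac, had, hcde⟩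
  simp [hau, hca.symm, hcu.symm, hda.symm, hdu.symm, hdc.symm,
    hec.symm, hed.symm, heu.symm, hea.symm]

def linkingQuadruples (H : Finset (Finset V)) (u v : V) (A : Finset V) :
    Finset (Σ _ : V, Σ _ : V, Σ _ : V, V) :=
  A.sigma fun a => (nbhd H a u ∩ nbhd H a v).sigma fun c =>
    ((nbhd H a u ∩ nbhd H a v).erase c).sigma fun d => nbhd H c d \ {u, v, a}

lemma Is3Graph.linkingQuadruples_spec (h3 : Is3Graph H) {u v : V} {A : Finset V}
    {t : Σ _ : V, Σ _ : V, Σ _ : V, V} (ht : t ∈ linkingQuadruples H u v A) :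
    #(quadSet t) = 4 ∧ HasPerfectTTilingOn H (insert u (quadSet t)) ∧
      HasPerfectTTilingOn H (insert v (quadSet t)) := by
  obtain ⟨a, c, d, e⟩ := t
  simp only [linkingQuadruples, mem_sigma, mem_inter, mem_erase, mem_sdiff, mem_insert,
    mem_singleton, not_or] at ht
  obtain ⟨-, ⟨hcu, hcv⟩, ⟨hdc, hdu, hdv⟩, he, heu, hev, hea⟩ := ht
  refine ⟨?_, h3.hasPerfectTTilingOn_insert hcu hdu hdc he heu hea,
    h3.hasPerfectTTilingOn_insert hcv hdv hdc he hev hea⟩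
  obtain ⟨hca, -⟩ := mem_nbhd.1 hcu
  obtain ⟨hda, -⟩ := mem_nbhd.1 hdu
  obtain ⟨hec, hed, -⟩ := mem_nbhd.1 he
  simp [quadSet, card_insert_of_notMem, hca.symm, hda.symm, hdc.symm, hec.symm, hed.symm,
    Ne.symm hea]

lemma linked_one_of_le_card {η : ℝ} {u v : V} (F : Finset (Finset V))
    (hF : ∀ S ∈ F, #S = 4 ∧ HasPerfectTTilingOn H (insert u S) ∧
      HasPerfectTTilingOn H (insert v S))
    (h : η * (Fintype.card V).choose 4 ≤ #F) : Linked H η 1 u v := by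
  refine h.trans ?_
  rw [← Set.ncard_coe_finset]
  exact_mod_cast Set.ncard_le_ncard (fun S hS => hF S hS) (Set.toFinite _)

lemma Is3Graph.linked_of_sq_div_nine_le_commonPairs (h3 : Is3Graph H)
    (hn : 180 ≤ Fintype.card V)
    (hD : ∀ x y, x ≠ y → (Fintype.card V : ℝ) / 3 ≤ #(nbhd H x y)) {η : ℝ} (hη : η ≤ 1 / 10 ^ 7)
    {u v : V} (huv : (Fintype.card V : ℝ) ^ 2 / 9 ≤ commonPairs H u v) :
    Linked H η 1 u v := by
  have hn' : (180 : ℝ) ≤ Fintype.card V := by exact_mod_cast hn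
  let A : Finset V := {a | (Fintype.card V : ℝ) / 18 ≤ #(nbhd H a u ∩ nbhd H a v)}
  let Q := linkingQuadruples H u v A
  have hA : (Fintype.card V : ℝ) / 18 ≤ #A := by
    have hsum := sum_le_card_filter_mul_add univ (fun a => (#(nbhd H a u ∩ nbhd H a v) : ℝ))
      (M := Fintype.card V) (t := Fintype.card V / 18) (by positivity)
      fun a _ => by exact_mod_cast card_le_univ _
    rw [card_univ] at hsum
    push_cast [commonPairs] at huv
    refine le_of_mul_le_mul_right ?_ (by positivity : (0 : ℝ) < Fintype.card V)
    nlinarith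
  have hQ : (Fintype.card V : ℝ) / 20 * (Fintype.card V / 20 * (Fintype.card V / 20 *
      (Fintype.card V / 4))) ≤ #Q := by
    refine le_card_sigma (by linarith) (by positivity) fun a ha =>
      le_card_sigma (by linarith [(mem_filter.1 ha).2]) (by positivity) fun c hc =>
        le_card_sigma ?_ (by positivity) fun d hd => ?_
    · have hcard : (#(nbhd H a u ∩ nbhd H a v) : ℝ) = #((nbhd H a u ∩ nbhd H a v).erase c) + 1 := by
        exact_mod_cast (card_erase_add_one hc).symm
      linarith [(mem_filter.1 ha).2]
    · have hcard : (#(nbhd H c d) : ℝ) ≤ #(nbhd H c d \ {u, v, a}) + 3 := by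
        exact_mod_cast card_le_card_sdiff_add_card.trans (Nat.add_le_add_left card_le_three _)
      linarith [hD c d (mem_erase.1 hd).1.symm]
  have hQ_image : (#Q : ℝ) ≤ 4 ^ 4 * #(Q.image quadSet) := by
    exact_mod_cast card_le_mul_card_image_quadSet Q
  refine linked_one_of_le_card (Q.image quadSet) (fun S hS => ?_) ?_
  · obtain ⟨t, ht, rfl⟩ := mem_image.1 hS
    exact h3.linkingQuadruples_spec ht
  · calc η * (Fintype.card V).choose 4 ≤ 1 / 10 ^ 7 * (Fintype.card V).choose 4 := by
          gcongr
      _ ≤ 1 / 10 ^ 7 * (Fintype.card V : ℝ) ^ 4 := by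
          gcongr; exact_mod_cast Nat.choose_le_pow _ _
      _ ≤ #(Q.image quadSet) := by nlinarith

end

/-- For every `α > 0` there is `η0 > 0` such that for every `0 < η < η0` there is `n0`
such that in any 3-graph on `n ≥ n0` vertices with minimum codegree at least `n/3 + αn`,
every vertex is `(η, 1)`-linked to at least `αn/2` vertices. -/
theorem many_linked_vertices :
    ∀ α : ℝ, 0 < α → ∃ η0 : ℝ, 0 < η0 ∧ ∀ η : ℝ, 0 < η → η < η0 →
      ∃ n0 : ℕ, ∀ n : ℕ, n0 ≤ n →
        ∀ H : Finset (Finset (Fin n)), Is3Graph H →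
          (∀ x y : Fin n, x ≠ y → (n : ℝ) / 3 + α * n ≤ (codeg H x y : ℝ)) →
          ∀ u : Fin n,
            α * n / 2 ≤ (({v : Fin n | Linked H η 1 u v} : Set (Fin n)).ncard : ℝ) := by
  intro α hα
  refine ⟨1 / 10 ^ 7, by norm_num, fun η _ hη => ⟨max 180 ⌈6 * (1 / 3 + α) ^ 2 / α⌉₊,
    fun n hn H h3 hcodeg u => ?_⟩⟩
  have hnα : 6 * (1 / 3 + α) ^ 2 ≤ α * Fintype.card (Fin n) := by
    rw [Fintype.card_fin, ← div_le_iff₀' hα]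
    exact (Nat.le_ceil _).trans (by exact_mod_cast le_of_max_le_right hn)
  have hD : ∀ x y : Fin n, x ≠ y →
      (Fintype.card (Fin n) : ℝ) / 3 + α * Fintype.card (Fin n) ≤ #(nbhd H x y) :=
    fun x y hxy => by
      rw [Fintype.card_fin]
      exact (hcodeg x y hxy).trans (by exact_mod_cast h3.codeg_le_card_nbhd hxy)
  have hlinked : ∀ v, (Fintype.card (Fin n) : ℝ) ^ 2 / 9 ≤ commonPairs H u v → Linked H η 1 u v :=
    fun v => h3.linked_of_sq_div_nine_le_commonPairs (by simpa using le_of_max_le_left hn)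
      (fun x y hxy => (le_add_of_nonneg_right (by positivity)).trans (hD x y hxy)) hη.le
  calc α * n / 2 ≤ #{v | (Fintype.card (Fin n) : ℝ) ^ 2 / 9 ≤ commonPairs H u v} := by
        simpa using h3.le_card_filter_commonPairs hα hnα hD u
    _ ≤ _ := by
        rw [← Set.ncard_coe_finset]
        exact_mod_cast Set.ncard_le_ncard (fun v hv => hlinked v (mem_filter.1 hv).2)
          (Set.toFinite _)
end

section
/- Let H_1 and H_2 be 3-graphs on a common vertex set V of size n ≥ 5 with minimum codegrees δ(H_1) ≥ 3 and δ(H_2) ≥ 3. Then there exists a colour covering homomorphism from T to (H_1, H_2); that is, there exist five distinct vertices x, y, z, u, v ∈ V such that {x,y,z} ∈ E(H_1), {x,y,u} ∈ E(H_2) and {u,v,z} ∈ E(H_2), so these three edges form a copy of the generalised triangle T with one edge in H_1 and the other two edges in H_2. -/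
open Finset

lemma edge_eq_triple {V : Type*} [DecidableEq V] {e : Finset V} {x y : V}
    (he : e.card = 3) (hx : x ∈ e) (hy : y ∈ e) (hxy : x ≠ y) :
    ∃ w, w ≠ x ∧ w ≠ y ∧ e = {x, y, w} := by
  have hsub : ({x, y} : Finset V) ⊆ e := by
    intro a ha; simp only [mem_insert, mem_singleton] at ha; rcases ha with rfl | rfl <;> assumption
  have hc2 : ({x, y} : Finset V).card = 2 := by
    rw [card_insert_of_notMem (by simpa using hxy), card_singleton]
  have hcd : (e \ {x, y}).card = 1 := by
    rw [card_sdiff_of_subset hsub, he, hc2]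
  obtain ⟨w, hw⟩ := Finset.card_eq_one.mp hcd
  have hwmem : w ∈ e \ {x, y} := by rw [hw]; exact mem_singleton_self w
  rw [mem_sdiff, mem_insert, mem_singleton] at hwmem
  refine ⟨w, fun h => hwmem.2 (Or.inl h), fun h => hwmem.2 (Or.inr h), ?_⟩
  have := Finset.sdiff_union_of_subset hsub
  rw [hw] at this
  rw [← this]
  ext a
  simp only [mem_union, mem_singleton, mem_insert]
  tauto

lemma third_vertex {V : Type*} [DecidableEq V] {H : Finset (Finset V)} (h3 : Is3Graph H)
    {x y : V} (hxy : x ≠ y) (hcd : 3 ≤ codeg H x y) (F : Finset V) (hF : F.card ≤ 2) :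
    ∃ w, w ∉ F ∧ w ≠ x ∧ w ≠ y ∧ ({x, y, w} : Finset V) ∈ H := by
  by_contra hcon
  push_neg at hcon
  have hsub : H.filter (fun e => x ∈ e ∧ y ∈ e) ⊆ F.image (fun w => ({x, y, w} : Finset V)) := by
    intro e he
    rw [mem_filter] at he
    obtain ⟨w, hwx, hwy, hew⟩ := edge_eq_triple (h3 e he.1) he.2.1 he.2.2 hxy
    have heH : ({x, y, w} : Finset V) ∈ H := hew ▸ he.1
    by_cases hwF : w ∈ F
    · exact mem_image.mpr ⟨w, hwF, hew.symm⟩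
    · exact absurd heH (hcon w hwF hwx hwy)
  have := (card_le_card hsub).trans (card_image_le.trans hF)
  rw [← codeg] at this
  omega

/-- If `H₁`, `H₂` are 3-graphs on a common vertex set of size at least 5, each with
minimum codegree at least 3, then there is a colour covering homomorphism from `T` to
`(H₁, H₂)`: five distinct vertices `x, y, z, u, v` with `{x,y,z} ∈ H₁`,
`{x,y,u} ∈ H₂` and `{u,v,z} ∈ H₂`. -/
theorem colour_covering {V : Type*} [DecidableEq V] [Fintype V]
    (hV : 5 ≤ Fintype.card V)
    (H₁ H₂ : Finset (Finset V)) (h₁ : Is3Graph H₁) (h₂ : Is3Graph H₂)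
    (hd₁ : ∀ x y : V, x ≠ y → 3 ≤ codeg H₁ x y)
    (hd₂ : ∀ x y : V, x ≠ y → 3 ≤ codeg H₂ x y) :
    ∃ x y z u v : V, ({x, y, z, u, v} : Finset V).card = 5 ∧
      ({x, y, z} : Finset V) ∈ H₁ ∧ ({x, y, u} : Finset V) ∈ H₂ ∧
      ({u, v, z} : Finset V) ∈ H₂ := by
  obtain ⟨x, y, hxy⟩ := Fintype.exists_pair_of_one_lt_card (α := V) (by omega)
  obtain ⟨z, -, hzx, hzy, hz⟩ := third_vertex h₁ hxy (hd₁ x y hxy) ∅ (by simp)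
  obtain ⟨u, huz, hux, huy, hu⟩ := third_vertex h₂ hxy (hd₂ x y hxy) {z} (by simp)
  rw [mem_singleton] at huz
  obtain ⟨v, hvF, hvu, hvz, hv⟩ :=
    third_vertex h₂ (show u ≠ z from huz) (hd₂ u z huz) {x, y} (by
      rw [card_insert_of_notMem (by simpa using hxy), card_singleton])
  simp only [mem_insert, mem_singleton, not_or] at hvF
  obtain ⟨hvx, hvy⟩ := hvF
  refine ⟨x, y, z, u, v, ?_, hz, hu, ?_⟩
  · rw [card_insert_of_notMem, card_insert_of_notMem, card_insert_of_notMem,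
      card_insert_of_notMem, card_singleton]
    · simpa using hvu.symm
    · simp only [mem_insert, mem_singleton, not_or]
      exact ⟨fun h => huz h.symm, fun h => hvz h.symm⟩
    · simp only [mem_insert, mem_singleton, not_or]
      exact ⟨hzy.symm, fun h => huy (h.symm), fun h => hvy h.symm⟩
    · simp only [mem_insert, mem_singleton, not_or]
      exact ⟨hxy, hzx.symm, fun h => hux h.symm, fun h => hvx h.symm⟩
  · have : ({u, v, z} : Finset V) = ({u, z, v} : Finset V) := by
      ext a; simp only [mem_insert, mem_singleton]; tauto
    rw [this]; exact hv
end
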